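/- Let c₁, c₂ > 0 and η ∈ [0,1). There exist constants C₀ ≥ 1 and C > 0, depending only on c₁, c₂ and η, with the following property. Let p ≥ 1, let Σ be a p×p real symmetric matrix with c₁ ≤ Σ_{ii} ≤ c₂ for all i, and set s_p := max_{1≤i≤p} Σ_{j=1}^p |Σ_{ij}|^η (Σ_{ii}Σ_{jj})^{(1−η)/2}. Let Σ̃ be a p×p real symmetric matrix with max_{i,j}|Σ̃_{ij} − Σ_{ij}| ≤ ω for some 0 < ω ≤ min(1, c₁/2). Set τ := C₀·ω and, for each i, j, τ_{ij} := τ·√((Σ̃_{ii} ∨ 0)(Σ̃_{jj} ∨ 0)). For i ≠ j let s_{ij} : ℝ → ℝ be any function satisfying |s_{ij}(z) − z| ≤ τ_{ij} for all z, and define the thresholded matrix Σ̂ entrywise by Σ̂_{ii} := Σ̃_{ii} ∨ 0 and, for i ≠ j, Σ̂_{ij} := s_{ij}(Σ̃_{ij}) if |Σ̃_{ij}| ≥ τ_{ij} and Σ̂_{ij} := 0 otherwise. Then max_{1≤i≤p} Σ_{j=1}^p |Σ̂_{ij} − Σ_{ij}| ≤ C·s_p·ω^{1−η}. -/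

import Mathlib

/-!
Since `|Σ̃ᵢⱼ − Σᵢⱼ| ≤ ω ≤ c₁/2`, the diagonal of `Σ̃` stays in `[c₁/2, c₂ + 1]`, so every threshold
`τᵢⱼ` lies between `2ω` (this fixes `C₀ = max 1 (4/c₁)`) and `C₀(c₂ + 1)ω`. An entry that survives
thresholding then has `|Σᵢⱼ| ≥ ω` and error `O(ω)`, while a killed entry has error `|Σᵢⱼ| = O(ω)`;
in both cases the error is `O(min(|Σᵢⱼ|, ω)) ≤ O(|Σᵢⱼ|^η ω^{1−η})`. The diagonal weights
`(ΣᵢᵢΣⱼⱼ)^{(1−η)/2} ≥ c₁^{1−η}` absorb the constant, and summing a row gives `s_p`.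
-/

namespace Real

theorem min_le_rpow_mul_rpow {u v η : ℝ} (hu : 0 ≤ u) (hv : 0 ≤ v) (hη₀ : 0 ≤ η) (hη₁ : η ≤ 1) :
    min u v ≤ u ^ η * v ^ (1 - η) := by
  have hm : 0 ≤ min u v := le_min hu hv
  calc min u v = min u v ^ η * min u v ^ (1 - η) := by
        rw [← rpow_add' hm (by norm_num), add_sub_cancel, rpow_one]
    _ ≤ u ^ η * v ^ (1 - η) :=
        mul_le_mul (rpow_le_rpow hm (min_le_left u v) hη₀)
          (rpow_le_rpow hm (min_le_right u v) (sub_nonneg.2 hη₁)) (by positivity) (by positivity)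

theorem sqrt_mul_max_zero_mem_Icc {x y lo hi : ℝ} (hlo : 0 ≤ lo)
    (hx : x ∈ Set.Icc lo hi) (hy : y ∈ Set.Icc lo hi) :
    √(max x 0 * max y 0) ∈ Set.Icc lo hi := by
  obtain ⟨hx₁, hx₂⟩ := hx
  obtain ⟨hy₁, hy₂⟩ := hy
  rw [max_eq_left (hlo.trans hx₁), max_eq_left (hlo.trans hy₁)]
  constructor
  · rw [← sqrt_mul_self hlo]
    exact sqrt_le_sqrt (mul_le_mul hx₁ hy₁ hlo (hlo.trans hx₁))
  · rw [← sqrt_mul_self (hlo.trans (hx₁.trans hx₂))]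
    exact sqrt_le_sqrt (mul_le_mul hx₂ hy₂ (hlo.trans hy₁) (hlo.trans (hx₁.trans hx₂)))

end Real

theorem abs_max_zero_sub_le_min {a b ω : ℝ} (ha : 0 ≤ a) (hba : |b - a| ≤ ω) (hωa : ω ≤ a) :
    |max b 0 - a| ≤ min |a| ω := by
  calc |max b 0 - a| = |max b 0 - max a 0| := by rw [max_eq_left ha]
    _ ≤ |b - a| := abs_max_sub_max_le_abs b a 0
    _ ≤ min |a| ω := le_min (by rw [abs_of_nonneg ha]; linarith) hba

theorem mul_mem_Icc_two_mul {c₁ c₂ C₀ ω t : ℝ} (hC₀ : 0 ≤ C₀) (hC₀c₁ : 4 ≤ C₀ * c₁)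
    (hω : 0 ≤ ω) (ht : t ∈ Set.Icc (c₁ / 2) (c₂ + 1)) :
    C₀ * ω * t ∈ Set.Icc (2 * ω) (C₀ * (c₂ + 1) * ω) := by
  have hC₀ω : 0 ≤ C₀ * ω := mul_nonneg hC₀ hω
  constructor
  · nlinarith [mul_le_mul_of_nonneg_left ht.1 hC₀ω]
  · nlinarith [mul_le_mul_of_nonneg_left ht.2 hC₀ω]

theorem abs_threshold_sub_le {a b y τ ω L : ℝ} (hL : 0 ≤ L) (hba : |b - a| ≤ ω)
    (hyb : |y - b| ≤ τ) (hτ : τ ∈ Set.Icc (2 * ω) (L * ω)) :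
    |(if τ ≤ |b| then y else 0) - a| ≤ (L + 1) * min |a| ω := by
  obtain ⟨hτ₁, hτ₂⟩ := hτ
  have hba' := abs_le.1 hba
  split_ifs with hkeep
  · have hωa : ω ≤ |a| := by
      have := abs_sub_abs_le_abs_sub b a
      linarith
    rw [min_eq_right hωa]
    calc |y - a| ≤ |y - b| + |b - a| := abs_sub_le y b a
      _ ≤ (L + 1) * ω := by linarith
  · have ha : |a| ≤ (L + 1) * ω := by
      have := abs_sub_abs_le_abs_sub a b
      rw [abs_sub_comm] at this
      linarith
    rw [zero_sub, abs_neg]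
    rcases min_cases |a| ω with ⟨hmin, -⟩ | ⟨hmin, -⟩ <;> rw [hmin]
    · nlinarith [abs_nonneg a]
    · exact ha

theorem min_abs_le_weight {a d₁ d₂ c ω η : ℝ} (hc : 0 < c) (h₁ : c ≤ d₁) (h₂ : c ≤ d₂)
    (hω : 0 ≤ ω) (hη₀ : 0 ≤ η) (hη₁ : η ≤ 1) :
    c ^ (1 - η) * min |a| ω ≤ |a| ^ η * (d₁ * d₂) ^ ((1 - η) / 2) * ω ^ (1 - η) := by
  have hc' : c ^ (1 - η) ≤ (d₁ * d₂) ^ ((1 - η) / 2) :=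
    calc c ^ (1 - η) = (c * c) ^ ((1 - η) / 2) := by
          rw [Real.mul_rpow hc.le hc.le, ← Real.rpow_add hc]
          ring_nf
      _ ≤ (d₁ * d₂) ^ ((1 - η) / 2) := by
          gcongr
          linarith
  calc c ^ (1 - η) * min |a| ω ≤ (d₁ * d₂) ^ ((1 - η) / 2) * (|a| ^ η * ω ^ (1 - η)) := by
        gcongr
        · exact Real.rpow_nonneg (mul_nonneg (hc.le.trans h₁) (hc.le.trans h₂)) _
        · exact Real.min_le_rpow_mul_rpow (abs_nonneg a) hω hη₀ hη₁
    _ = |a| ^ η * (d₁ * d₂) ^ ((1 - η) / 2) * ω ^ (1 - η) := by ring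

theorem sum_le_mul_ciSup_sum_mul {ι κ : Type*} [Finite ι] [Fintype κ] {e : κ → ℝ}
    {w : ι → κ → ℝ} {C ρ : ℝ} (hC : 0 ≤ C) (hρ : 0 ≤ ρ) (i : ι)
    (h : ∀ j, e j ≤ C * w i j * ρ) :
    ∑ j, e j ≤ C * (⨆ i', ∑ j, w i' j) * ρ :=
  calc ∑ j, e j ≤ ∑ j, C * w i j * ρ := Finset.sum_le_sum fun j _ => h j
    _ = C * (∑ j, w i j) * ρ := by rw [Finset.mul_sum, Finset.sum_mul]
    _ ≤ C * (⨆ i', ∑ j, w i' j) * ρ := by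
        gcongr
        exact le_ciSup (f := fun i' => ∑ j, w i' j) (Set.finite_range _).bddAbove i

/-- Deterministic error bound for the adaptive generalized-thresholding estimator of an
approximately sparse covariance matrix: given a preliminary estimator accurate to level ω
in the max norm, the thresholded estimator has maximum absolute row-sum error at most
C·s_p·ω^{1−η}. -/
theorem stmt_16 (c₁ c₂ η : ℝ) (hc₁ : 0 < c₁) (hc₂ : 0 < c₂) (hη₀ : 0 ≤ η) (hη₁ : η < 1) :
    ∃ C₀ C : ℝ, 1 ≤ C₀ ∧ 0 < C ∧
      ∀ (p : ℕ), 1 ≤ p →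
      ∀ (S St : Matrix (Fin p) (Fin p) ℝ),
        S.IsHermitian → St.IsHermitian →
        (∀ i, c₁ ≤ S i i) → (∀ i, S i i ≤ c₂) →
        ∀ ω : ℝ, 0 < ω → ω ≤ min 1 (c₁ / 2) →
        (∀ i j, |St i j - S i j| ≤ ω) →
        ∀ s : Fin p → Fin p → ℝ → ℝ,
          (∀ i j : Fin p, i ≠ j → ∀ z : ℝ,
            |s i j z - z| ≤ C₀ * ω * Real.sqrt (max (St i i) 0 * max (St j j) 0)) →
          ∀ i : Fin p,
            ∑ j, |(if i = j then max (St i i) 0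
                   else if C₀ * ω * Real.sqrt (max (St i i) 0 * max (St j j) 0) ≤ |St i j|
                     then s i j (St i j) else 0) - S i j|
              ≤ C * (⨆ i' : Fin p, ∑ j, |S i' j| ^ η * (S i' i' * S j j) ^ ((1 - η) / 2)) *
                ω ^ (1 - η) := by
  obtain ⟨C₀, hC₀, hC₀c₁⟩ : ∃ C₀ : ℝ, 1 ≤ C₀ ∧ 4 ≤ C₀ * c₁ :=
    ⟨max 1 (4 / c₁), le_max_left _ _, (div_le_iff₀ hc₁).1 (le_max_right _ _)⟩
  have hL : 0 ≤ C₀ * (c₂ + 1) := mul_nonneg (by linarith) (by linarith)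
  have hc₁η : 0 < c₁ ^ (1 - η) := Real.rpow_pos_of_pos hc₁ _
  have hC : 0 < (C₀ * (c₂ + 1) + 1) / c₁ ^ (1 - η) := div_pos (by linarith) hc₁η
  refine ⟨C₀, _, hC₀, hC, ?_⟩
  intro p _ S St _ _ hS₁ hS₂ ω hω hωle hSt s hs i
  obtain ⟨hω₁, hωc₁⟩ := le_min_iff.1 hωle
  have hdiag (k : Fin p) : St k k ∈ Set.Icc (c₁ / 2) (c₂ + 1) := by
    have := abs_le.1 (hSt k k)
    constructor <;> linarith [hS₁ k, hS₂ k]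
  refine sum_le_mul_ciSup_sum_mul hC.le (by positivity) i fun j => ?_
  calc _ ≤ (C₀ * (c₂ + 1) + 1) * min |S i j| ω := by
        by_cases hij : i = j
        · rw [if_pos hij]
          subst hij
          refine (abs_max_zero_sub_le_min (by linarith [hS₁ i]) (hSt i i) ?_).trans ?_
          · linarith [hS₁ i]
          · exact le_mul_of_one_le_left (le_min (abs_nonneg _) hω.le) (by linarith)
        · rw [if_neg hij]
          exact abs_threshold_sub_le hL (hSt i j) (hs i j hij _) <| mul_mem_Icc_two_mul
            (by linarith) hC₀c₁ hω.le
            (Real.sqrt_mul_max_zero_mem_Icc (by linarith) (hdiag i) (hdiag j))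
    _ = (C₀ * (c₂ + 1) + 1) / c₁ ^ (1 - η) * (c₁ ^ (1 - η) * min |S i j| ω) := by field_simp
    _ ≤ (C₀ * (c₂ + 1) + 1) / c₁ ^ (1 - η) *
          (|S i j| ^ η * (S i i * S j j) ^ ((1 - η) / 2) * ω ^ (1 - η)) :=
        mul_le_mul_of_nonneg_left (min_abs_le_weight hc₁ (hS₁ i) (hS₁ j) hω.le hη₀ hη₁.le) hC.le
    _ = _ := by ring
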